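/- If a four-partite density matrix is a product of two bipartite states, ρ_{ABCD} = σ_{AB} ⊗ τ_{CD}, then both pairwise convoluted metrics vanish: M_AB = 0 and M_CD = 0, where M_AB := 2S(ρ_AB) + S(ρ_ACD) + S(ρ_BCD) − S(ρ_A) − S(ρ_B) − 2S(ρ_ABCD) and M_CD := 2S(ρ_CD) + S(ρ_ABC) + S(ρ_ABD) − S(ρ_C) − S(ρ_D) − 2S(ρ_ABCD). -/

import Mathlib

open Matrix Kronecker
open scoped ComplexOrder

noncomputable section

/-- The von Neumann entropy of a matrix: `S(ρ) = -∑ᵢ λᵢ log λᵢ` where `λᵢ` are the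
eigenvalues of `ρ` (defined for Hermitian matrices; `0` otherwise, and with the
convention `0 log 0 = 0` built into `Real.log 0 = 0`). -/
def vN {n : Type*} [Fintype n] [DecidableEq n] (ρ : Matrix n n ℂ) : ℝ :=
  if h : ρ.IsHermitian then -∑ i, h.eigenvalues i * Real.log (h.eigenvalues i) else 0

/-- A density matrix: positive semidefinite with unit trace. -/
def IsDensityMatrix {n : Type*} [Fintype n] (ρ : Matrix n n ℂ) : Prop :=
  ρ.PosSemidef ∧ ρ.trace = 1

section Quadripartite

variable {A B C D : Type*} [Fintype A] [Fintype B] [Fintype C] [Fintype D]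
  [DecidableEq A] [DecidableEq B] [DecidableEq C] [DecidableEq D]

/-- Reduced density matrix `ρ_AB` (partial trace over `C` and `D`). -/
def rAB (ρ : Matrix ((A × B) × C × D) ((A × B) × C × D) ℂ) : Matrix (A × B) (A × B) ℂ :=
  fun x y => ∑ z : C × D, ρ (x, z) (y, z)

/-- Reduced density matrix `ρ_CD` (partial trace over `A` and `B`). -/
def rCD (ρ : Matrix ((A × B) × C × D) ((A × B) × C × D) ℂ) : Matrix (C × D) (C × D) ℂ :=
  fun x y => ∑ w : A × B, ρ (w, x) (w, y)

/-- Reduced density matrix `ρ_ACD` (partial trace over `B`). -/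
def rACD (ρ : Matrix ((A × B) × C × D) ((A × B) × C × D) ℂ) :
    Matrix (A × C × D) (A × C × D) ℂ :=
  fun x y => ∑ b : B, ρ ((x.1, b), x.2) ((y.1, b), y.2)

/-- Reduced density matrix `ρ_BCD` (partial trace over `A`). -/
def rBCD (ρ : Matrix ((A × B) × C × D) ((A × B) × C × D) ℂ) :
    Matrix (B × C × D) (B × C × D) ℂ :=
  fun x y => ∑ a : A, ρ ((a, x.1), x.2) ((a, y.1), y.2)

/-- Reduced density matrix `ρ_ABC` (partial trace over `D`). -/
def rABC (ρ : Matrix ((A × B) × C × D) ((A × B) × C × D) ℂ) :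
    Matrix ((A × B) × C) ((A × B) × C) ℂ :=
  fun x y => ∑ d : D, ρ (x.1, x.2, d) (y.1, y.2, d)

/-- Reduced density matrix `ρ_ABD` (partial trace over `C`). -/
def rABD (ρ : Matrix ((A × B) × C × D) ((A × B) × C × D) ℂ) :
    Matrix ((A × B) × D) ((A × B) × D) ℂ :=
  fun x y => ∑ c : C, ρ (x.1, c, x.2) (y.1, c, y.2)

/-- Reduced density matrix `ρ_A`. -/
def rA (ρ : Matrix ((A × B) × C × D) ((A × B) × C × D) ℂ) : Matrix A A ℂ :=
  fun a a' => ∑ b : B, ∑ z : C × D, ρ ((a, b), z) ((a', b), z)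

/-- Reduced density matrix `ρ_B`. -/
def rB (ρ : Matrix ((A × B) × C × D) ((A × B) × C × D) ℂ) : Matrix B B ℂ :=
  fun b b' => ∑ a : A, ∑ z : C × D, ρ ((a, b), z) ((a, b'), z)

/-- Reduced density matrix `ρ_C`. -/
def rC (ρ : Matrix ((A × B) × C × D) ((A × B) × C × D) ℂ) : Matrix C C ℂ :=
  fun c c' => ∑ w : A × B, ∑ d : D, ρ (w, c, d) (w, c', d)

/-- Reduced density matrix `ρ_D`. -/
def rD (ρ : Matrix ((A × B) × C × D) ((A × B) × C × D) ℂ) : Matrix D D ℂ :=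
  fun d d' => ∑ w : A × B, ∑ c : C, ρ (w, c, d) (w, c, d')

end Quadripartite


/-! ### Auxiliary lemmas -/

section Aux

open Polynomial

private lemma my_charpoly_conj {n : Type*} [Fintype n] [DecidableEq n]
    (W M : Matrix n n ℂ) (h1 : W * Wᴴ = 1) :
    (W * M * Wᴴ).charpoly = M.charpoly := by
  have key : charmatrix (W * M * Wᴴ)
      = (W.map C) * charmatrix M * (Wᴴ.map C) := by
    unfold charmatrix
    rw [mul_sub, sub_mul]
    congr 1
    · rw [← (scalar_commute (X : ℂ[X]) (fun r' => Commute.all _ _) (W.map C)).eq, mul_assoc,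
        ← Matrix.map_mul, h1, Matrix.map_one _ (map_zero C) (map_one C), mul_one]
    · simp only [RingHom.mapMatrix_apply, ← Matrix.map_mul]
  have hdet : (W.map C).det * (Wᴴ.map C).det = 1 := by
    rw [← det_mul, ← Matrix.map_mul, h1, Matrix.map_one _ (map_zero C) (map_one C), det_one]
  unfold Matrix.charpoly
  rw [key, det_mul, det_mul, mul_comm, ← mul_assoc, mul_comm ((Wᴴ.map C).det), hdet, one_mul]

private lemma my_charpoly_diagonal {n : Type*} [Fintype n] [DecidableEq n] (v : n → ℂ) :
    (diagonal v).charpoly = ∏ i, (X - C (v i)) := by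
  have : charmatrix (diagonal v) = diagonal (fun i => X - C (v i)) := by
    ext i j
    by_cases h : i = j
    · subst h; simp [charmatrix_apply]
    · simp [charmatrix_apply, diagonal_apply_ne _ h]
  rw [Matrix.charpoly, this, det_diagonal]

private lemma eig_multiset_eq {n : Type*} [Fintype n] [DecidableEq n]
    (M : Matrix n n ℂ) (hM : M.IsHermitian) (W : Matrix n n ℂ) (d : n → ℝ)
    (h1 : W * Wᴴ = 1) (hrep : M = W * diagonal (fun i => (d i : ℂ)) * Wᴴ) :
    (Finset.univ.val.map fun i => ((hM.eigenvalues i : ℝ) : ℂ))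
      = Finset.univ.val.map fun i => ((d i : ℝ) : ℂ) := by
  have hU : (hM.eigenvectorUnitary : Matrix n n ℂ) * (hM.eigenvectorUnitary : Matrix n n ℂ)ᴴ
      = 1 := by
    simpa [star] using (Matrix.mem_unitaryGroup_iff.mp hM.eigenvectorUnitary.2)
  have hc1 : M.charpoly = ∏ i, (X - C ((hM.eigenvalues i : ℝ) : ℂ)) := by
    calc M.charpoly
        = ((hM.eigenvectorUnitary : Matrix n n ℂ) * diagonal (RCLike.ofReal ∘ hM.eigenvalues)
            * (star (hM.eigenvectorUnitary : Matrix n n ℂ))).charpoly := by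
          rw [← Unitary.conjStarAlgAut_apply (S := ℂ), ← hM.spectral_theorem]
      _ = (diagonal (RCLike.ofReal ∘ hM.eigenvalues)).charpoly := by
          rw [show (star (hM.eigenvectorUnitary : Matrix n n ℂ))
              = (hM.eigenvectorUnitary : Matrix n n ℂ)ᴴ from rfl]
          exact my_charpoly_conj _ _ hU
      _ = _ := my_charpoly_diagonal _
  have hc2 : M.charpoly = ∏ i, (X - C ((d i : ℝ) : ℂ)) := by
    rw [hrep, my_charpoly_conj _ _ h1, my_charpoly_diagonal]
  have key : (((Finset.univ.val.map fun i => ((hM.eigenvalues i : ℝ) : ℂ))).map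
      fun a => X - C a).prod = (((Finset.univ.val.map fun i => ((d i : ℝ) : ℂ))).map
      fun a => X - C a).prod := by
    rw [Multiset.map_map, Multiset.map_map, ← Finset.prod_eq_multiset_prod,
      ← Finset.prod_eq_multiset_prod]
    simp only [Function.comp]
    rw [← hc1, ← hc2]
  have := congrArg Polynomial.roots key
  rwa [roots_multiset_prod_X_sub_C, roots_multiset_prod_X_sub_C] at this

private lemma vN_of_unitary_diag {n : Type*} [Fintype n] [DecidableEq n]
    (M : Matrix n n ℂ) (W : Matrix n n ℂ) (d : n → ℝ) (h1 : W * Wᴴ = 1)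
    (hrep : M = W * diagonal (fun i => (d i : ℂ)) * Wᴴ) :
    vN M = -∑ i, d i * Real.log (d i) := by
  have hdiag : (diagonal (fun i => ((d i : ℝ) : ℂ)))ᴴ = diagonal (fun i => ((d i : ℝ) : ℂ)) := by
    rw [diagonal_conjTranspose]
    have : (star fun i => ((d i : ℝ) : ℂ)) = fun i => ((d i : ℝ) : ℂ) :=
      funext fun i => Complex.conj_ofReal _
    rw [this]
  have hM : M.IsHermitian := by
    rw [hrep]
    show _ᴴ = _
    simp only [conjTranspose_mul, conjTranspose_conjTranspose, hdiag, mul_assoc]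
  rw [vN, dif_pos hM]
  have hms := eig_multiset_eq M hM W d h1 hrep
  have := congrArg (fun s : Multiset ℂ => (s.map fun z => z.re * Real.log z.re).sum) hms
  simp only [Multiset.map_map, Function.comp] at this
  simp only [Complex.ofReal_re] at this
  rw [← Finset.sum_eq_multiset_sum, ← Finset.sum_eq_multiset_sum] at this
  rw [this]

private lemma kron_conjTranspose {n m : Type*} [Fintype n] [Fintype m]
    (A : Matrix n n ℂ) (B : Matrix m m ℂ) : (A ⊗ₖ B)ᴴ = Aᴴ ⊗ₖ Bᴴ := by
  ext ⟨i, j⟩ ⟨k, l⟩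
  simp [conjTranspose_apply, kroneckerMap_apply, mul_comm]

private lemma sum_eigenvalues_eq_one {n : Type*} [Fintype n] [DecidableEq n]
    (P : Matrix n n ℂ) (hP : P.IsHermitian) (ht : P.trace = 1) :
    ∑ i, hP.eigenvalues i = 1 := by
  have h2 : (star (hP.eigenvectorUnitary : Matrix n n ℂ))
      * (hP.eigenvectorUnitary : Matrix n n ℂ) = 1 := Unitary.coe_star_mul_self _
  have : P.trace = ∑ i, ((hP.eigenvalues i : ℝ) : ℂ) := by
    calc P.trace
        = ((hP.eigenvectorUnitary : Matrix n n ℂ) * diagonal (RCLike.ofReal ∘ hP.eigenvalues)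
            * (star (hP.eigenvectorUnitary : Matrix n n ℂ))).trace := by
          rw [← Unitary.conjStarAlgAut_apply (S := ℂ), ← hP.spectral_theorem]
      _ = ((star (hP.eigenvectorUnitary : Matrix n n ℂ))
            * ((hP.eigenvectorUnitary : Matrix n n ℂ)
              * diagonal (RCLike.ofReal ∘ hP.eigenvalues))).trace := by
          rw [trace_mul_comm]
      _ = (diagonal (RCLike.ofReal ∘ hP.eigenvalues)).trace := by rw [← mul_assoc, h2, one_mul]
      _ = ∑ i, ((hP.eigenvalues i : ℝ) : ℂ) := by simp [trace, diag]
  rw [ht] at this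
  exact_mod_cast this.symm

/-- Additivity of von Neumann entropy for Kronecker products of density matrices. -/
private lemma vN_kron {n m : Type*} [Fintype n] [DecidableEq n] [Fintype m] [DecidableEq m]
    (P : Matrix n n ℂ) (Q : Matrix m m ℂ) (hP : P.PosSemidef) (hQ : Q.PosSemidef)
    (hPt : P.trace = 1) (hQt : Q.trace = 1) : vN (P ⊗ₖ Q) = vN P + vN Q := by
  set lam := hP.1.eigenvalues with hlam
  set mu := hQ.1.eigenvalues with hmu
  set U := (hP.1.eigenvectorUnitary : Matrix n n ℂ)
  set V := (hQ.1.eigenvectorUnitary : Matrix m m ℂ)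
  have hU : U * Uᴴ = 1 := by
    simpa [star] using Matrix.mem_unitaryGroup_iff.mp hP.1.eigenvectorUnitary.2
  have hV : V * Vᴴ = 1 := by
    simpa [star] using Matrix.mem_unitaryGroup_iff.mp hQ.1.eigenvectorUnitary.2
  have hW : (U ⊗ₖ V) * (U ⊗ₖ V)ᴴ = 1 := by
    rw [kron_conjTranspose, ← mul_kronecker_mul, hU, hV, one_kronecker_one]
  have hrep : P ⊗ₖ Q = (U ⊗ₖ V) *
      diagonal (fun p : n × m => ((lam p.1 * mu p.2 : ℝ) : ℂ)) * (U ⊗ₖ V)ᴴ := by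
    calc P ⊗ₖ Q = (U * diagonal (RCLike.ofReal ∘ lam) * Uᴴ) ⊗ₖ
          (V * diagonal (RCLike.ofReal ∘ mu) * Vᴴ) := by
          conv_lhs => rw [hP.1.spectral_theorem, hQ.1.spectral_theorem]
          rfl
      _ = (U ⊗ₖ V) * (diagonal (RCLike.ofReal ∘ lam) ⊗ₖ diagonal (RCLike.ofReal ∘ mu))
            * (Uᴴ ⊗ₖ Vᴴ) := by rw [← mul_kronecker_mul, ← mul_kronecker_mul]
      _ = _ := by
          rw [kron_conjTranspose, diagonal_kronecker_diagonal]
          congr 1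
          congr 1
          funext p
          push_cast
          rfl
  have hvnP : vN P = -∑ i, lam i * Real.log (lam i) := by rw [vN, dif_pos hP.1]
  have hvnQ : vN Q = -∑ j, mu j * Real.log (mu j) := by rw [vN, dif_pos hQ.1]
  rw [vN_of_unitary_diag _ _ _ hW hrep, hvnP, hvnQ]
  have hlamsum : ∑ i, lam i = 1 := sum_eigenvalues_eq_one P hP.1 hPt
  have hmusum : ∑ j, mu j = 1 := sum_eigenvalues_eq_one Q hQ.1 hQt
  have hterm : ∀ p : n × m, lam p.1 * mu p.2 * Real.log (lam p.1 * mu p.2)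
      = mu p.2 * (lam p.1 * Real.log (lam p.1)) + lam p.1 * (mu p.2 * Real.log (mu p.2)) := by
    rintro ⟨i, j⟩
    rcases eq_or_ne (lam i) 0 with h | h
    · simp [h]
    rcases eq_or_ne (mu j) 0 with h' | h'
    · simp [h']
    rw [Real.log_mul h h']
    ring
  rw [Fintype.sum_prod_type]
  have step : ∀ i, ∑ j, lam i * mu j * Real.log (lam i * mu j)
      = lam i * Real.log (lam i) + lam i * (∑ j, mu j * Real.log (mu j)) := by
    intro i
    calc ∑ j, lam i * mu j * Real.log (lam i * mu j)
        = ∑ j, (mu j * (lam i * Real.log (lam i)) + lam i * (mu j * Real.log (mu j))) :=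
          Finset.sum_congr rfl fun j _ => hterm (i, j)
      _ = (∑ j, mu j) * (lam i * Real.log (lam i)) + lam i * (∑ j, mu j * Real.log (mu j)) := by
          rw [Finset.sum_add_distrib, Finset.sum_mul, Finset.mul_sum]
      _ = _ := by rw [hmusum, one_mul]
  simp only [step]
  rw [Finset.sum_add_distrib, ← Finset.sum_mul, hlamsum, one_mul]
  ring

section PartialTrace

variable {α β : Type*} [Fintype α] [Fintype β] [DecidableEq α] [DecidableEq β]

private lemma pt2_posSemidef (M : Matrix (α × β) (α × β) ℂ) (hM : M.PosSemidef) :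
    (Matrix.of fun a a' => ∑ b, M (a, b) (a', b) : Matrix α α ℂ).PosSemidef := by
  refine Matrix.PosSemidef.of_dotProduct_mulVec_nonneg ?_ ?_
  · ext a a'
    simp only [conjTranspose_apply, of_apply, star_sum]
    exact Finset.sum_congr rfl fun b _ => hM.1.apply (a, b) (a', b)
  · intro x
    have hb : ∀ b : β, star (fun p : α × β => if p.2 = b then x p.1 else 0) ⬝ᵥ
        (M *ᵥ fun p : α × β => if p.2 = b then x p.1 else 0)
        = ∑ a, ∑ a', star (x a) * (M (a, b) (a', b) * x a') := by
      intro b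
      simp only [dotProduct, mulVec, Pi.star_apply, Fintype.sum_prod_type, apply_ite,
        star_zero, ite_mul, zero_mul, mul_ite, mul_zero, Finset.sum_ite_eq', Finset.mem_univ,
        if_true, Finset.mul_sum, dotProduct]
      refine Finset.sum_congr rfl fun a _ => ?_
      rw [Finset.sum_comm]
      simp [Finset.sum_ite_eq']
    have key : star x ⬝ᵥ ((Matrix.of fun a a' => ∑ b, M (a, b) (a', b)) *ᵥ x)
        = ∑ b, star (fun p : α × β => if p.2 = b then x p.1 else 0) ⬝ᵥ
            (M *ᵥ fun p : α × β => if p.2 = b then x p.1 else 0) := by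
      simp only [hb]
      have e0 : star x ⬝ᵥ ((Matrix.of fun a a' => ∑ b, M (a, b) (a', b)) *ᵥ x)
          = ∑ a, ∑ a', ∑ b, star (x a) * (M (a, b) (a', b) * x a') := by
        simp only [dotProduct, mulVec, Pi.star_apply, of_apply, Finset.sum_mul, Finset.mul_sum]
      rw [e0]
      rw [show (∑ a, ∑ a', ∑ b, star (x a) * (M (a, b) (a', b) * x a'))
          = ∑ a, ∑ b, ∑ a', star (x a) * (M (a, b) (a', b) * x a') from
        Finset.sum_congr rfl fun a _ => Finset.sum_comm]
      exact Finset.sum_comm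
    rw [key]
    exact Finset.sum_nonneg fun b _ => hM.dotProduct_mulVec_nonneg _

private lemma pt1_posSemidef (M : Matrix (α × β) (α × β) ℂ) (hM : M.PosSemidef) :
    (Matrix.of fun b b' => ∑ a, M (a, b) (a, b') : Matrix β β ℂ).PosSemidef := by
  refine Matrix.PosSemidef.of_dotProduct_mulVec_nonneg ?_ ?_
  · ext b b'
    simp only [conjTranspose_apply, of_apply, star_sum]
    exact Finset.sum_congr rfl fun a _ => hM.1.apply (a, b) (a, b')
  · intro x
    have hb : ∀ a : α, star (fun p : α × β => if p.1 = a then x p.2 else 0) ⬝ᵥ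
        (M *ᵥ fun p : α × β => if p.1 = a then x p.2 else 0)
        = ∑ b, ∑ b', star (x b) * (M (a, b) (a, b') * x b') := by
      intro a
      simp only [dotProduct, mulVec, Pi.star_apply, Fintype.sum_prod_type, apply_ite,
        star_zero, ite_mul, zero_mul, mul_ite, mul_zero, Finset.sum_ite_eq', Finset.mem_univ,
        if_true, Finset.mul_sum, dotProduct]
      simp [Finset.sum_ite_eq', Finset.sum_ite_eq]
    have key : star x ⬝ᵥ ((Matrix.of fun b b' => ∑ a, M (a, b) (a, b')) *ᵥ x)
        = ∑ a, star (fun p : α × β => if p.1 = a then x p.2 else 0) ⬝ᵥ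
            (M *ᵥ fun p : α × β => if p.1 = a then x p.2 else 0) := by
      simp only [hb]
      have e0 : star x ⬝ᵥ ((Matrix.of fun b b' => ∑ a, M (a, b) (a, b')) *ᵥ x)
          = ∑ b, ∑ b', ∑ a, star (x b) * (M (a, b) (a, b') * x b') := by
        simp only [dotProduct, mulVec, Pi.star_apply, of_apply, Finset.sum_mul, Finset.mul_sum]
      rw [e0]
      rw [show (∑ b, ∑ b', ∑ a, star (x b) * (M (a, b) (a, b') * x b'))
          = ∑ b, ∑ a, ∑ b', star (x b) * (M (a, b) (a, b') * x b') from
        Finset.sum_congr rfl fun b _ => Finset.sum_comm]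
      exact Finset.sum_comm
    rw [key]
    exact Finset.sum_nonneg fun a _ => hM.dotProduct_mulVec_nonneg _

private lemma pt2_trace (M : Matrix (α × β) (α × β) ℂ) :
    (Matrix.of fun a a' => ∑ b, M (a, b) (a', b) : Matrix α α ℂ).trace = M.trace := by
  simp [trace, Matrix.diag, Fintype.sum_prod_type]

private lemma pt1_trace (M : Matrix (α × β) (α × β) ℂ) :
    (Matrix.of fun b b' => ∑ a, M (a, b) (a, b') : Matrix β β ℂ).trace = M.trace := by
  rw [trace, trace]
  simp only [Matrix.diag, of_apply, Fintype.sum_prod_type]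
  exact Finset.sum_comm

end PartialTrace

end Aux

/-- If a four-partite density matrix is a product `ρ_ABCD = σ_AB ⊗ τ_CD` of two bipartite
density matrices, then both pairwise convoluted metrics vanish:
`M_AB = 2S(ρ_AB) + S(ρ_ACD) + S(ρ_BCD) − S(ρ_A) − S(ρ_B) − 2S(ρ_ABCD) = 0` and
`M_CD = 2S(ρ_CD) + S(ρ_ABC) + S(ρ_ABD) − S(ρ_C) − S(ρ_D) − 2S(ρ_ABCD) = 0`. -/
theorem convoluted_metrics_vanish_of_biproduct
    {A B C D : Type*} [Fintype A] [Fintype B] [Fintype C] [Fintype D]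
    [DecidableEq A] [DecidableEq B] [DecidableEq C] [DecidableEq D]
    (σ : Matrix (A × B) (A × B) ℂ) (τ : Matrix (C × D) (C × D) ℂ)
    (hσ : IsDensityMatrix σ) (hτ : IsDensityMatrix τ)
    (ρ : Matrix ((A × B) × C × D) ((A × B) × C × D) ℂ) (hρ : ρ = σ ⊗ₖ τ) :
    2 * vN (rAB ρ) + vN (rACD ρ) + vN (rBCD ρ) - vN (rA ρ) - vN (rB ρ) - 2 * vN ρ = 0 ∧
    2 * vN (rCD ρ) + vN (rABC ρ) + vN (rABD ρ) - vN (rC ρ) - vN (rD ρ) - 2 * vN ρ = 0 := by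
  subst hρ
  obtain ⟨hσp, hσt⟩ := hσ
  obtain ⟨hτp, hτt⟩ := hτ
  set σA : Matrix A A ℂ := Matrix.of fun a a' => ∑ b, σ (a, b) (a', b) with hσA
  set σB : Matrix B B ℂ := Matrix.of fun b b' => ∑ a, σ (a, b) (a, b') with hσB
  set τC : Matrix C C ℂ := Matrix.of fun c c' => ∑ d, τ (c, d) (c', d) with hτC
  set τD : Matrix D D ℂ := Matrix.of fun d d' => ∑ c, τ (c, d) (c, d') with hτD
  have hσAp := pt2_posSemidef σ hσp
  have hσBp := pt1_posSemidef σ hσp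
  have hτCp := pt2_posSemidef τ hτp
  have hτDp := pt1_posSemidef τ hτp
  have hσAt : σA.trace = 1 := by rw [hσA, pt2_trace, hσt]
  have hσBt : σB.trace = 1 := by rw [hσB, pt1_trace, hσt]
  have hτCt : τC.trace = 1 := by rw [hτC, pt2_trace, hτt]
  have hτDt : τD.trace = 1 := by rw [hτD, pt1_trace, hτt]
  -- identify the reduced density matrices
  have hAB : rAB (σ ⊗ₖ τ) = σ := by
    funext x y
    show ∑ z : C × D, σ x y * τ z z = σ x y
    rw [← Finset.mul_sum, show (∑ z : C × D, τ z z) = τ.trace from rfl, hτt, mul_one]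
  have hCD : rCD (σ ⊗ₖ τ) = τ := by
    funext x y
    show ∑ w : A × B, σ w w * τ x y = τ x y
    rw [← Finset.sum_mul, show (∑ w : A × B, σ w w) = σ.trace from rfl, hσt, one_mul]
  have hACD : rACD (σ ⊗ₖ τ) = σA ⊗ₖ τ := by
    funext x y
    show ∑ b : B, σ (x.1, b) (y.1, b) * τ x.2 y.2 = _
    rw [← Finset.sum_mul]
    rfl
  have hBCD : rBCD (σ ⊗ₖ τ) = σB ⊗ₖ τ := by
    funext x y
    show ∑ a : A, σ (a, x.1) (a, y.1) * τ x.2 y.2 = _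
    rw [← Finset.sum_mul]
    rfl
  have hABC : rABC (σ ⊗ₖ τ) = σ ⊗ₖ τC := by
    funext x y
    show ∑ d : D, σ x.1 y.1 * τ (x.2, d) (y.2, d) = _
    rw [← Finset.mul_sum]
    rfl
  have hABD : rABD (σ ⊗ₖ τ) = σ ⊗ₖ τD := by
    funext x y
    show ∑ c : C, σ x.1 y.1 * τ (c, x.2) (c, y.2) = _
    rw [← Finset.mul_sum]
    rfl
  have hA : rA (σ ⊗ₖ τ) = σA := by
    funext a a'
    show ∑ b : B, ∑ z : C × D, σ (a, b) (a', b) * τ z z = _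
    simp only [← Finset.mul_sum, show (∑ z : C × D, τ z z) = τ.trace from rfl, hτt, mul_one]
    rfl
  have hB : rB (σ ⊗ₖ τ) = σB := by
    funext b b'
    show ∑ a : A, ∑ z : C × D, σ (a, b) (a, b') * τ z z = _
    simp only [← Finset.mul_sum, show (∑ z : C × D, τ z z) = τ.trace from rfl, hτt, mul_one]
    rfl
  have hC : rC (σ ⊗ₖ τ) = τC := by
    funext c c'
    show ∑ w : A × B, ∑ d : D, σ w w * τ (c, d) (c', d) = _
    rw [Finset.sum_comm]
    show ∑ d : D, ∑ w : A × B, σ w w * τ (c, d) (c', d) = _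
    simp only [← Finset.sum_mul, show (∑ w : A × B, σ w w) = σ.trace from rfl, hσt, one_mul]
    rfl
  have hD : rD (σ ⊗ₖ τ) = τD := by
    funext d d'
    show ∑ w : A × B, ∑ c : C, σ w w * τ (c, d) (c, d') = _
    rw [Finset.sum_comm]
    show ∑ c : C, ∑ w : A × B, σ w w * τ (c, d) (c, d') = _
    simp only [← Finset.sum_mul, show (∑ w : A × B, σ w w) = σ.trace from rfl, hσt, one_mul]
    rfl
  rw [hAB, hCD, hACD, hBCD, hABC, hABD, hA, hB, hC, hD]
  rw [vN_kron σ τ hσp hτp hσt hτt, vN_kron σA τ hσAp hτp hσAt hτt,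
    vN_kron σB τ hσBp hτp hσBt hτt, vN_kron σ τC hσp hτCp hσt hτCt,
    vN_kron σ τD hσp hτDp hσt hτDt]
  constructor <;> ring
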